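/- arXiv:2206.08103 — 2 statements merged into one kernel-verified Lean document; each statement's English description precedes it below -/
import Mathlib

section
/- In the braid group B_m, the set P of σ_i-positive braids (elements representable by a word containing σ_i but containing no σ_i⁻¹ and no σ_j^{±1} with j < i, for some i) is closed under multiplication. -/
/-- The braid relations on `m` generators `σ₀, …, σ_{m-1}` (as elements of the free
group), namely `σᵢσⱼ = σⱼσᵢ` for `|i−j| ≥ 2` and `σᵢσⱼσᵢ = σⱼσᵢσⱼ` for `|i−j| = 1`. -/
def braidRels (m : ℕ) : Set (FreeGroup (Fin m)) :=
  {r | (∃ i j : Fin m, 2 ≤ Nat.dist i.val j.val ∧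
          r = FreeGroup.of i * FreeGroup.of j * (FreeGroup.of i)⁻¹ * (FreeGroup.of j)⁻¹) ∨
       (∃ i j : Fin m, Nat.dist i.val j.val = 1 ∧
          r = FreeGroup.of i * FreeGroup.of j * FreeGroup.of i *
              (FreeGroup.of j)⁻¹ * (FreeGroup.of i)⁻¹ * (FreeGroup.of j)⁻¹)}

/-- The braid group on `m + 1` strands, presented by `m` generators and the braid
relations. -/
def BraidGroup (m : ℕ) : Type := PresentedGroup (braidRels m)

noncomputable instance (m : ℕ) : Group (BraidGroup m) :=
  inferInstanceAs (Group (PresentedGroup (braidRels m)))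

/-- The element of the braid group represented by a word: a list of pairs `(i, b)` where
`b = true` stands for the letter `σᵢ` and `b = false` for `σᵢ⁻¹`. -/
noncomputable def wordProd {m : ℕ} (l : List (Fin m × Bool)) : BraidGroup m :=
  (l.map fun p => if p.2 then (PresentedGroup.of p.1 : PresentedGroup (braidRels m))
    else (PresentedGroup.of p.1 : PresentedGroup (braidRels m))⁻¹).prod

/-- A braid is `σᵢ`-positive if it is representable by a word containing the letter `σᵢ`
but no `σᵢ⁻¹` and no `σⱼ^{±1}` with `j < i`, for some `i`. -/
def DehornoyPositive {m : ℕ} (x : BraidGroup m) : Prop :=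
  ∃ (i : Fin m) (l : List (Fin m × Bool)), wordProd l = x ∧
    (i, true) ∈ l ∧ (i, false) ∉ l ∧ ∀ p ∈ l, ¬ p.1 < i

/-- The set of `σᵢ`-positive braids is closed under multiplication. -/
theorem stmt_15 {m : ℕ} (x y : BraidGroup m)
    (hx : DehornoyPositive x) (hy : DehornoyPositive y) :
    DehornoyPositive (x * y) := by
  obtain ⟨i, lx, hlx, hmx, hfx, hgx⟩ := hx
  obtain ⟨j, ly, hly, hmy, hfy, hgy⟩ := hy
  have happ : wordProd (lx ++ ly) = x * y := by
    rw [← hlx, ← hly]; unfold wordProd; rw [List.map_append, List.prod_append]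
  rcases lt_trichotomy i j with hij | hij | hij
  · refine ⟨i, lx ++ ly, happ, List.mem_append_left _ hmx, ?_, ?_⟩
    · intro h
      rcases List.mem_append.1 h with h | h
      · exact hfx h
      · exact hgy _ h hij
    · intro p hp
      rcases List.mem_append.1 hp with h | h
      · exact hgx _ h
      · exact fun hlt => hgy _ h (hlt.trans hij)
  · subst hij
    refine ⟨i, lx ++ ly, happ, List.mem_append_left _ hmx, ?_, ?_⟩
    · intro h
      rcases List.mem_append.1 h with h | h
      · exact hfx h
      · exact hfy h
    · intro p hp
      rcases List.mem_append.1 hp with h | h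
      · exact hgx _ h
      · exact hgy _ h
  · refine ⟨j, lx ++ ly, happ, List.mem_append_right _ hmy, ?_, ?_⟩
    · intro h
      rcases List.mem_append.1 h with h | h
      · exact hgx _ h hij
      · exact hfy h
    · intro p hp
      rcases List.mem_append.1 hp with h | h
      · exact fun hlt => hgx _ h (hlt.trans hij)
      · exact hgy _ h
end

section
/- Free groups of finite rank are residually finite: for every nontrivial element x of a free group F_m there exists a finite group Q and a homomorphism φ : F_m → Q with φ(x) ≠ 1; consequently F_m embeds into its profinite completion. -/
open Equiv

namespace RFAux

variable {m : ℕ}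

/-- Reducedness condition on a word: no adjacent cancelling pair. -/
def Reduced (w : List (Fin m × Bool)) : Prop :=
  ∀ k (g : Fin m) (b : Bool), w[k]? = some (g, b) → w[k+1]? ≠ some (g, !b)

variable (w : List (Fin m × Bool))

/-- Domain predicate for the partial map attached to letter `g`. -/
def P (g : Fin m) (j : Fin (w.length + 1)) : Prop :=
  (0 < j.val ∧ w[j.val - 1]? = some (g, true)) ∨ w[j.val]? = some (g, false)

/-- Codomain predicate. -/
def Q (g : Fin m) (j : Fin (w.length + 1)) : Prop :=
  w[j.val]? = some (g, true) ∨ (0 < j.val ∧ w[j.val - 1]? = some (g, false))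

instance (g : Fin m) : DecidablePred (P w g) := fun _ => by unfold P; infer_instance
instance (g : Fin m) : DecidablePred (Q w g) := fun _ => by unfold Q; infer_instance

lemma lt_of_some {k : ℕ} {a : Fin m × Bool} (h : w[k]? = some a) : k < w.length := by
  by_contra hk
  rw [List.getElem?_eq_none (by omega)] at h
  exact nomatch h

variable {w} (hw : Reduced w)
include hw

/-- The partial bijection attached to a letter, as an equivalence of subtypes. -/
noncomputable def eg (g : Fin m) : { j // P w g j } ≃ { j // Q w g j } where
  toFun := fun ⟨j, hj⟩ =>
    if h1 : 0 < j.val ∧ w[j.val - 1]? = some (g, true) then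
      ⟨⟨j.val - 1, by omega⟩, Or.inl h1.2⟩
    else
      have h2 : w[j.val]? = some (g, false) := hj.resolve_left h1
      ⟨⟨j.val + 1, by have := lt_of_some w h2; omega⟩,
        Or.inr ⟨Nat.succ_pos _, by simpa using h2⟩⟩
  invFun := fun ⟨j, hj⟩ =>
    if h1 : w[j.val]? = some (g, true) then
      ⟨⟨j.val + 1, by have := lt_of_some w h1; omega⟩,
        Or.inl ⟨Nat.succ_pos _, by simpa using h1⟩⟩
    else
      have h2 : 0 < j.val ∧ w[j.val - 1]? = some (g, false) := hj.resolve_left h1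
      ⟨⟨j.val - 1, by omega⟩, Or.inr (by simpa using h2.2)⟩
  left_inv := by
    rintro ⟨j, hj⟩
    by_cases h1 : 0 < j.val ∧ w[j.val - 1]? = some (g, true)
    · simp only [dif_pos h1]
      rw [dif_pos (by simpa using h1.2)]
      ext
      simp only []
      omega
    · have h2 : w[j.val]? = some (g, false) := hj.resolve_left h1
      simp only [dif_neg h1]
      have hne : ¬ w[j.val + 1]? = some (g, true) := by
        intro hc
        exact hw j.val g false h2 (by simpa using hc)
      rw [dif_neg (by simpa using hne)]
      ext
      simp only []
      omega
  right_inv := by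
    rintro ⟨j, hj⟩
    by_cases h1 : w[j.val]? = some (g, true)
    · simp only [dif_pos h1]
      rw [dif_pos (by constructor <;> simpa using h1)]
      ext
      simp only []
      omega
    · have h2 : 0 < j.val ∧ w[j.val - 1]? = some (g, false) := hj.resolve_left h1
      simp only [dif_neg h1]
      have hne : ¬ (0 < j.val - 1 ∧ w[j.val - 1 - 1]? = some (g, true)) := by
        rintro ⟨hp, hc⟩
        exact hw (j.val - 1 - 1) g true hc (by rw [show j.val - 1 - 1 + 1 = j.val - 1 by omega]; simpa using h2.2)
      rw [dif_neg (by simpa using hne)]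
      ext
      simp only []
      omega

/-- The permutation attached to a letter. -/
noncomputable def sigma (g : Fin m) : Perm (Fin (w.length + 1)) :=
  (eg hw g).extendSubtype

lemma sigma_tt {k : ℕ} {g : Fin m} (h : w[k]? = some (g, true)) :
    sigma hw g ⟨k + 1, by have := lt_of_some w h; omega⟩ = ⟨k, by have := lt_of_some w h; omega⟩ := by
  have hp : P w g ⟨k + 1, by have := lt_of_some w h; omega⟩ := Or.inl ⟨Nat.succ_pos _, by simpa using h⟩
  rw [sigma, Equiv.extendSubtype_apply_of_mem _ _ hp, eg]
  simp only [Equiv.coe_fn_mk]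
  rw [dif_pos (show 0 < k + 1 ∧ _ from ⟨Nat.succ_pos _, by simpa using h⟩)]
  rfl

lemma sigma_ff {k : ℕ} {g : Fin m} (h : w[k]? = some (g, false)) :
    sigma hw g ⟨k, by have := lt_of_some w h; omega⟩ = ⟨k + 1, by have := lt_of_some w h; omega⟩ := by
  have hp : P w g ⟨k, by have := lt_of_some w h; omega⟩ := Or.inr h
  rw [sigma, Equiv.extendSubtype_apply_of_mem _ _ hp, eg]
  simp only [Equiv.coe_fn_mk]
  have hne : ¬ (0 < k ∧ w[k - 1]? = some (g, true)) := by
    rintro ⟨hk, hc⟩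
    exact hw (k - 1) g true hc (by rw [show k - 1 + 1 = k by omega]; simpa using h)
  rw [dif_neg hne]

lemma prod_drop (d : ℕ) : ∀ (k : ℕ) (_ : k + d = w.length),
    (((w.drop k).map fun x => cond x.2 (sigma hw x.1) (sigma hw x.1)⁻¹).prod)
      ⟨w.length, by omega⟩ = ⟨k, by omega⟩ := by
  induction d with
  | zero =>
    intro k hk
    have hke : k = w.length := by omega
    subst hke
    simp [List.drop_length]
  | succ d ih =>
    intro k hk
    have hklt : k < w.length := by omega
    rw [List.drop_eq_getElem_cons hklt]
    rcases hget : w[k]'hklt with ⟨g, b⟩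
    have hsome : w[k]? = some (g, b) := by
      rw [List.getElem?_eq_getElem hklt, hget]
    rw [List.map_cons, List.prod_cons]
    have ihk := ih (k + 1) (by omega)
    rw [Equiv.Perm.mul_apply, ihk]
    cases b with
    | true =>
      show sigma hw g ⟨k + 1, _⟩ = ⟨k, _⟩
      exact sigma_tt hw hsome
    | false =>
      show (sigma hw g)⁻¹ ⟨k + 1, _⟩ = ⟨k, _⟩
      rw [Equiv.Perm.inv_eq_iff_eq]
      exact (sigma_ff hw hsome).symm

end RFAux
/-- Free groups of finite rank are residually finite: every nontrivial element survives
in some finite quotient; consequently the canonical map of `F_m` into the product of all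
its quotients by finite-index normal subgroups (hence into its profinite completion) is
injective. -/
theorem stmt_19 (m : ℕ) :
    (∀ x : FreeGroup (Fin m), x ≠ 1 →
      ∃ (Q : Type) (_ : Group Q) (_ : Finite Q) (φ : FreeGroup (Fin m) →* Q), φ x ≠ 1) ∧
    Function.Injective
      (fun x : FreeGroup (Fin m) =>
        fun N : {N : Subgroup (FreeGroup (Fin m)) // N.Normal ∧ N.FiniteIndex} =>
          (QuotientGroup.mk x : FreeGroup (Fin m) ⧸ N.1)) := by
  have main : ∀ x : FreeGroup (Fin m), x ≠ 1 →
      ∃ (Q : Type) (_ : Group Q) (_ : Finite Q) (φ : FreeGroup (Fin m) →* Q), φ x ≠ 1 := by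
    intro x hx
    set w : List (Fin m × Bool) := x.toWord with hwdef
    have hred : RFAux.Reduced w := by
      intro k g b h1 h2
      have hk1 : k + 1 < w.length := RFAux.lt_of_some w h2
      rw [List.getElem?_eq_getElem (by omega)] at h1
      rw [List.getElem?_eq_getElem (by omega)] at h2
      have e1 : w[k] = (g, b) := Option.some.inj h1
      have e2 : w[k+1] = (g, !b) := Option.some.inj h2
      have hsplit : w = w.take k ++ (g, b) :: (g, !b) :: w.drop (k + 2) := by
        conv_lhs => rw [← List.take_append_drop k w]
        congr 1
        rw [List.drop_eq_getElem_cons (show k < w.length by omega), e1,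
          List.drop_eq_getElem_cons (show k + 1 < w.length by omega), e2]
      exact FreeGroup.reduce.not (L₂ := w.take k)
        (by rw [x.reduce_toWord]; exact hsplit)
    have hne : w ≠ [] := fun h => hx (FreeGroup.toWord_eq_nil_iff.mp h)
    refine ⟨Equiv.Perm (Fin (w.length + 1)), inferInstance, inferInstance,
      FreeGroup.lift (fun g => RFAux.sigma hred g), ?_⟩
    intro hone
    have hx' : x = FreeGroup.mk w := (FreeGroup.mk_toWord).symm
    have hprod := RFAux.prod_drop hred w.length 0 (by omega)
    rw [List.drop_zero] at hprod
    have happ : (FreeGroup.lift (fun g => RFAux.sigma hred g) x)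
        ⟨w.length, by omega⟩ = ⟨0, by omega⟩ := by
      rw [congrArg (FreeGroup.lift (fun g => RFAux.sigma hred g)) hx', FreeGroup.lift_mk]
      exact hprod
    rw [hone] at happ
    have hlen : w.length = 0 := by
      have := congrArg Fin.val happ
      simpa using this
    exact hne (List.length_eq_zero_iff.mp hlen)
  refine ⟨main, ?_⟩
  intro x y h
  by_contra hxy
  have hz : x⁻¹ * y ≠ 1 := fun hc => hxy (inv_mul_eq_one.mp hc)
  obtain ⟨Q, _, _, ψ, hψ⟩ := main (x⁻¹ * y) hz
  have hfin : ψ.ker.FiniteIndex := by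
    have hfr : Finite ψ.range := Subtype.finite
    have : Finite (FreeGroup (Fin m) ⧸ ψ.ker) :=
      Finite.of_equiv ψ.range (QuotientGroup.quotientKerEquivRange ψ).symm
    exact Subgroup.finiteIndex_of_finite_quotient
  have hmem : x⁻¹ * y ∈ ψ.ker := by
    have := congrFun h ⟨ψ.ker, ⟨MonoidHom.normal_ker ψ, hfin⟩⟩
    exact (QuotientGroup.eq).mp this
  exact hψ hmem
end
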